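/- Let G ⊆ ℝ^m and s ∈ ℝ^m. If s has two distinct conic representations by elements of G, then the set of elements of G appearing in some conic representation of s is linearly dependent. Conversely, if the elements of G appearing in representations of s are linearly dependent, and each such element appears in some representation with positive coefficient, then s has at least two distinct conic representations. -/

import Mathlib

/-- A conic representation of s by elements of G, encoded as a finitely supported
function with support in G and positive coefficients on the support. -/
def IsConicRepr (m : ℕ) (G : Set (Fin m → ℝ)) (s : Fin m → ℝ)
    (r : (Fin m → ℝ) →₀ ℝ) : Prop :=
  (↑r.support ⊆ G) ∧ (∀ g ∈ r.support, 0 < r g) ∧ r.sum (fun g c => c • g) = s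

/-- The set of elements of G appearing (with positive coefficient) in some conic
representation of s. -/
def ConicAtoms (m : ℕ) (G : Set (Fin m → ℝ)) (s : Fin m → ℝ) : Set (Fin m → ℝ) :=
  {g | ∃ r : (Fin m → ℝ) →₀ ℝ, IsConicRepr m G s r ∧ g ∈ r.support}

/-! Two distinct representations differ by a nonzero element of the kernel of
`linearCombination ℝ id` supported on the atoms. Conversely, representations form a convex set,
so averaging finitely many of them gives one, `r`, that is positive at every atom occurring in a
given linear dependence `l`; then `r + ε • l` is a second representation for small `ε > 0`. -/

open Filter Topology

namespace Finsupp

variable {ι : Type*}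

theorem support_add_eq_union_of_nonneg {α : Type*} [AddCommMonoid α] [PartialOrder α]
    [IsOrderedCancelAddMonoid α] [DecidableEq ι] {f g : ι →₀ α} (hf : 0 ≤ f) (hg : 0 ≤ g) :
    (f + g).support = f.support ∪ g.support := by
  refine support_add.antisymm (Finset.union_subset (fun i hi => ?_) (fun i hi => ?_)) <;>
    rw [mem_support_iff] at hi ⊢
  · exact (add_pos_of_pos_of_nonneg ((hf i).lt_of_ne' hi) (hg i)).ne'
  · exact (add_pos_of_nonneg_of_pos (hf i) ((hg i).lt_of_ne' hi)).ne'

theorem exists_pos_nonneg_add_smul {𝕜 : Type*} [Field 𝕜] [LinearOrder 𝕜] [IsStrictOrderedRing 𝕜]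
    [TopologicalSpace 𝕜] [OrderTopology 𝕜] {f l : ι →₀ 𝕜} (hf : 0 ≤ f)
    (hl : l.support ⊆ f.support) :
    ∃ ε : 𝕜, 0 < ε ∧ 0 ≤ f + ε • l := by
  have hnear : ∀ᶠ ε in 𝓝 (0 : 𝕜), ∀ i ∈ l.support, 0 < f i + ε * l i := by
    refine (Finset.eventually_all l.support).2 fun i hi => ?_
    have hfi : 0 < f i := (hf i).lt_of_ne' (mem_support_iff.1 (hl hi))
    exact (continuous_const.add (continuous_id.mul continuous_const)).continuousAt.eventually
      (lt_mem_nhds (by simpa using hfi))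
  obtain ⟨ε, hε, hεpos⟩ := ((hnear.filter_mono nhdsWithin_le_nhds).and
    (self_mem_nhdsWithin (s := Set.Ioi 0))).exists
  refine ⟨ε, hεpos, fun i => ?_⟩
  by_cases hi : i ∈ l.support
  · simpa using (hε i hi).le
  · simpa [notMem_support_iff.1 hi] using hf i

end Finsupp

open Finsupp

section ConicRepr

variable {m : ℕ} {G : Set (Fin m → ℝ)} {s : Fin m → ℝ} {r r₁ r₂ : (Fin m → ℝ) →₀ ℝ}

theorem isConicRepr_iff :
    IsConicRepr m G s r ↔ ↑r.support ⊆ G ∧ 0 ≤ r ∧ linearCombination ℝ id r = s := by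
  refine and_congr_right fun _ => and_congr ⟨fun h g => ?_, fun h g hg => ?_⟩ Iff.rfl
  · by_cases hg : g ∈ r.support
    · exact (h g hg).le
    · simp [notMem_support_iff.1 hg]
  · exact (h g).lt_of_ne' (mem_support_iff.1 hg)

theorem IsConicRepr.mem_supported_conicAtoms (h : IsConicRepr m G s r) :
    r ∈ supported ℝ ℝ (ConicAtoms m G s) :=
  fun _ hg => ⟨r, h, hg⟩

theorem IsConicRepr.linearCombination_sub (h₁ : IsConicRepr m G s r₁)
    (h₂ : IsConicRepr m G s r₂) : linearCombination ℝ id (r₁ - r₂) = 0 := by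
  rw [map_sub, (isConicRepr_iff.1 h₁).2.2, (isConicRepr_iff.1 h₂).2.2, sub_self]

theorem IsConicRepr.support_smul_add_smul (h₁ : IsConicRepr m G s r₁)
    (h₂ : IsConicRepr m G s r₂) {a b : ℝ} (ha : 0 < a) (hb : 0 < b) :
    (a • r₁ + b • r₂).support = r₁.support ∪ r₂.support := by
  rw [support_add_eq_union_of_nonneg (smul_nonneg ha.le (isConicRepr_iff.1 h₁).2.1)
    (smul_nonneg hb.le (isConicRepr_iff.1 h₂).2.1), support_smul_eq ha.ne', support_smul_eq hb.ne']

theorem IsConicRepr.smul_add_smul (h₁ : IsConicRepr m G s r₁) (h₂ : IsConicRepr m G s r₂)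
    {a b : ℝ} (ha : 0 < a) (hb : 0 < b) (hab : a + b = 1) :
    IsConicRepr m G s (a • r₁ + b • r₂) := by
  obtain ⟨hG₁, hpos₁, hs₁⟩ := isConicRepr_iff.1 h₁
  obtain ⟨hG₂, hpos₂, hs₂⟩ := isConicRepr_iff.1 h₂
  refine isConicRepr_iff.2 ⟨?_, ?_, ?_⟩
  · rw [h₁.support_smul_add_smul h₂ ha hb, Finset.coe_union]
    exact Set.union_subset hG₁ hG₂
  · exact add_nonneg (smul_nonneg ha.le hpos₁) (smul_nonneg hb.le hpos₂)
  · rw [map_add, map_smul, map_smul, hs₁, hs₂, ← add_smul, hab, one_smul]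

theorem exists_isConicRepr_support_superset {T : Finset (Fin m → ℝ)} (hT : T.Nonempty)
    (hTA : ↑T ⊆ ConicAtoms m G s) : ∃ r, IsConicRepr m G s r ∧ T ⊆ r.support := by
  induction hT using Finset.Nonempty.cons_induction with
  | singleton g =>
    obtain ⟨r, hr, hg⟩ := hTA (Finset.mem_singleton_self g)
    exact ⟨r, hr, Finset.singleton_subset_iff.2 hg⟩
  | cons g T _ _ ih =>
    rw [Finset.coe_cons, Set.insert_subset_iff] at hTA
    obtain ⟨r₁, h₁, hg⟩ := hTA.1
    obtain ⟨r₂, h₂, hT₂⟩ := ih hTA.2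
    refine ⟨_, h₁.smul_add_smul h₂ one_half_pos one_half_pos (add_halves 1), ?_⟩
    rw [h₁.support_smul_add_smul h₂ one_half_pos one_half_pos]
    exact Finset.cons_subset.2 ⟨Finset.mem_union_left _ hg, hT₂.trans Finset.subset_union_right⟩

theorem IsConicRepr.exists_add_smul (h : IsConicRepr m G s r) {l : (Fin m → ℝ) →₀ ℝ}
    (hl : l.support ⊆ r.support) (hl₀ : linearCombination ℝ id l = 0) :
    ∃ ε : ℝ, 0 < ε ∧ IsConicRepr m G s (r + ε • l) := by
  obtain ⟨hG, hpos, hs⟩ := isConicRepr_iff.1 h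
  obtain ⟨ε, hε, hnn⟩ := exists_pos_nonneg_add_smul hpos hl
  refine ⟨ε, hε, isConicRepr_iff.2 ⟨fun g hg => hG ?_, hnn, ?_⟩⟩
  · rcases Finset.mem_union.1 (support_add hg) with hg | hg
    · exact hg
    · exact hl (support_smul hg)
  · rw [map_add, map_smul, hs, hl₀, smul_zero, add_zero]

end ConicRepr

/-- s has two distinct conic representations by elements of G iff the set of elements
of G appearing in some conic representation of s is linearly dependent. -/
theorem indeterminate_iff_atoms_linearDependent (m : ℕ) (G : Set (Fin m → ℝ))
    (s : Fin m → ℝ) :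
    ((∃ r₁ r₂ : (Fin m → ℝ) →₀ ℝ,
        IsConicRepr m G s r₁ ∧ IsConicRepr m G s r₂ ∧ r₁ ≠ r₂) →
      ¬ LinearIndependent ℝ (fun g : ConicAtoms m G s => (g : Fin m → ℝ))) ∧
    ((¬ LinearIndependent ℝ (fun g : ConicAtoms m G s => (g : Fin m → ℝ))) →
      ∃ r₁ r₂ : (Fin m → ℝ) →₀ ℝ,
        IsConicRepr m G s r₁ ∧ IsConicRepr m G s r₂ ∧ r₁ ≠ r₂) := by
  rw [linearIndependent_subtype_iff, linearIndepOn_iff]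
  constructor
  · rintro ⟨r₁, r₂, h₁, h₂, hne⟩ hindep
    have hsupp := sub_mem h₁.mem_supported_conicAtoms h₂.mem_supported_conicAtoms
    exact hne (sub_eq_zero.1 (hindep _ hsupp (h₁.linearCombination_sub h₂)))
  · intro hdep
    push Not at hdep
    obtain ⟨l, hl, hl₀, hl_ne⟩ := hdep
    obtain ⟨r, hr, hlr⟩ :=
      exists_isConicRepr_support_superset (support_nonempty_iff.2 hl_ne) ((mem_supported ℝ l).1 hl)
    obtain ⟨ε, hε, hr'⟩ := hr.exists_add_smul hlr hl₀
    refine ⟨r, r + ε • l, hr, hr', fun h => ?_⟩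
    exact smul_ne_zero hε.ne' hl_ne (add_eq_left.1 h.symm)
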